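/- arXiv:2605.30841 — 5 statements merged into one kernel-verified Lean document; each statement's English description precedes it below -/
import Mathlib

section
/- Let W ∈ ℝ^{q×q} be symmetric positive definite with w_min I ⪯ W for some w_min > 0, let A ∈ ℝ^{(m+1)×q} satisfy ‖A‖₂ ≤ a, and suppose M := A W⁻¹ Aᵀ satisfies λ_min(M) ≥ μ_M > 0. Let b ∈ ℝ^{m+1} and c^π, c^ℓ ∈ ℝ^q, set r := b − A c^ℓ, and let ĉ := c^π + W⁻¹ Aᵀ M⁻¹ (b − A c^π). If ‖c^π − c^ℓ‖_W ≤ κ_π Δ² and ‖r‖₂ ≤ ρ for constants κ_π, ρ ≥ 0 and Δ > 0, then ‖ĉ − c^ℓ‖₂ ≤ (κ_π/√w_min) Δ² + a ρ / (w_min μ_M). -/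
open Matrix
open scoped Matrix.Norms.L2Operator

/-- The smallest eigenvalue of a (Hermitian) real matrix. -/
noncomputable def lambdaMin {ι : Type*} [Fintype ι] [DecidableEq ι] [Nonempty ι]
    (M : Matrix ι ι ℝ) : ℝ :=
  if h : M.IsHermitian then ⨅ i, h.eigenvalues i else 0

/-- The `W`-weighted norm `‖v‖_W = √(vᵀ W v)`. -/
noncomputable def wNorm {ι : Type*} [Fintype ι] (W : Matrix ι ι ℝ) (v : ι → ℝ) : ℝ :=
  Real.sqrt (v ⬝ᵥ (W *ᵥ v))

/-- The Euclidean norm `‖v‖₂ = √(vᵀ v)` of a vector. -/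
noncomputable def eNorm {ι : Type*} [Fintype ι] (v : ι → ℝ) : ℝ :=
  Real.sqrt (v ⬝ᵥ v)

/-!
With `e = cπ - cℓ` and `P = W⁻¹ Aᵀ M⁻¹ A`, one has `ĉ - cℓ = (1 - P) e + W⁻¹ Aᵀ M⁻¹ r`.
Since `P` is the `W`-orthogonal projection onto `range (W⁻¹ Aᵀ)`, Pythagoras gives
`‖(1 - P) e‖_W ≤ ‖e‖_W`, and `w_min I ⪯ W` converts this into `√w_min ‖(1 - P) e‖₂ ≤ ‖e‖_W`.
The second term is bounded factor by factor: a lower Loewner bound `c I ⪯ W` gives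
`c ‖W⁻¹ z‖₂ ≤ ‖z‖₂` (via `c ‖x‖² ≤ xᵀ W x ≤ ‖x‖ ‖W x‖`), used for `W` and for `M`,
while `‖Aᵀ‖₂ = ‖A‖₂`.
-/

section EuclideanNorm

variable {m n : Type*} [Fintype m] [Fintype n]

lemma eNorm_eq_norm_toLp (v : n → ℝ) : eNorm v = ‖WithLp.toLp 2 v‖ := by
  rw [norm_eq_sqrt_real_inner, EuclideanSpace.inner_eq_star_dotProduct, star_trivial, eNorm]

lemma eNorm_nonneg (v : n → ℝ) : 0 ≤ eNorm v := Real.sqrt_nonneg _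

lemma sq_eNorm (v : n → ℝ) : eNorm v ^ 2 = v ⬝ᵥ v := by
  rw [eNorm_eq_norm_toLp, ← real_inner_self_eq_norm_sq, EuclideanSpace.inner_eq_star_dotProduct,
    star_trivial]

lemma eNorm_add_le (u v : n → ℝ) : eNorm (u + v) ≤ eNorm u + eNorm v := by
  simpa only [eNorm_eq_norm_toLp, WithLp.toLp_add] using norm_add_le _ _

lemma dotProduct_le_eNorm_mul_eNorm (u v : n → ℝ) : u ⬝ᵥ v ≤ eNorm u * eNorm v := by
  simpa only [eNorm_eq_norm_toLp, EuclideanSpace.inner_eq_star_dotProduct, star_trivial,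
    dotProduct_comm v] using real_inner_le_norm (WithLp.toLp 2 u) (WithLp.toLp 2 v)

lemma eNorm_mulVec_le [DecidableEq n] (A : Matrix m n ℝ) (v : n → ℝ) :
    eNorm (A *ᵥ v) ≤ ‖A‖ * eNorm v := by
  rw [eNorm_eq_norm_toLp, eNorm_eq_norm_toLp]
  exact A.l2_opNorm_mulVec (WithLp.toLp 2 v)

lemma eNorm_transpose_mulVec_le [DecidableEq m] [DecidableEq n] (A : Matrix m n ℝ)
    (v : m → ℝ) : eNorm (Aᵀ *ᵥ v) ≤ ‖A‖ * eNorm v := by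
  have h := eNorm_mulVec_le Aᴴ v
  rwa [l2_opNorm_conjTranspose, conjTranspose_eq_transpose_of_trivial] at h

end EuclideanNorm

namespace Matrix.PosSemidef

variable {n : Type*} [DecidableEq n] {W : Matrix n n ℝ} {c : ℝ}

lemma posDef_of_sub_smul_one (h : (W - c • 1).PosSemidef) (hc : 0 < c) : W.PosDef := by
  simpa using PosDef.posSemidef_add h (PosDef.one.smul hc)

variable [Fintype n]

lemma mul_dotProduct_self_le (h : (W - c • 1).PosSemidef) (x : n → ℝ) :
    c * (x ⬝ᵥ x) ≤ x ⬝ᵥ (W *ᵥ x) := by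
  simpa only [star_trivial, sub_mulVec, dotProduct_sub, smul_mulVec, one_mulVec,
    dotProduct_smul, sub_nonneg, smul_eq_mul] using h.dotProduct_mulVec_nonneg x

lemma mul_eNorm_le_eNorm_mulVec (h : (W - c • 1).PosSemidef) (x : n → ℝ) :
    c * eNorm x ≤ eNorm (W *ᵥ x) := by
  rcases (eNorm_nonneg x).eq_or_lt with hx | hx
  · rw [← hx, mul_zero]
    exact eNorm_nonneg _
  refine le_of_mul_le_mul_right ?_ hx
  calc c * eNorm x * eNorm x = c * (x ⬝ᵥ x) := by rw [mul_assoc, ← sq, sq_eNorm]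
    _ ≤ x ⬝ᵥ (W *ᵥ x) := h.mul_dotProduct_self_le x
    _ ≤ eNorm (W *ᵥ x) * eNorm x := by
      rw [mul_comm]
      exact dotProduct_le_eNorm_mul_eNorm _ _

lemma mul_eNorm_inv_mulVec_le (h : (W - c • 1).PosSemidef) (hc : 0 < c) (z : n → ℝ) :
    c * eNorm (W⁻¹ *ᵥ z) ≤ eNorm z := by
  have hdet : IsUnit W.det := (isUnit_iff_isUnit_det W).mp (h.posDef_of_sub_smul_one hc).isUnit
  simpa only [mulVec_mulVec, mul_nonsing_inv W hdet, one_mulVec]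
    using h.mul_eNorm_le_eNorm_mulVec (W⁻¹ *ᵥ z)

lemma eNorm_le_wNorm_div_sqrt (h : (W - c • 1).PosSemidef) (hc : 0 < c) (x : n → ℝ) :
    eNorm x ≤ wNorm W x / √c := by
  rw [le_div_iff₀ (Real.sqrt_pos.mpr hc), mul_comm, eNorm, wNorm,
    ← Real.sqrt_mul' c (sq_eNorm x ▸ sq_nonneg _)]
  exact Real.sqrt_le_sqrt (h.mul_dotProduct_self_le x)

end Matrix.PosSemidef

lemma sub_smul_one_posSemidef_of_le_lambdaMin {n : Type*} [Fintype n] [DecidableEq n]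
    [Nonempty n] {M : Matrix n n ℝ} (hM : M.IsHermitian) {μ : ℝ} (h : μ ≤ lambdaMin M) :
    (M - μ • (1 : Matrix n n ℝ)).PosSemidef := by
  open scoped MatrixOrder in
  rw [← le_iff, ← Algebra.algebraMap_eq_smul_one, algebraMap_le_iff_le_spectrum hM.isSelfAdjoint,
    hM.spectrum_real_eq_range_eigenvalues]
  rintro _ ⟨i, rfl⟩
  rw [lambdaMin, dif_pos hM] at h
  exact h.trans (ciInf_le (Finite.bddBelow_range _) i)

lemma dotProduct_mulVec_add_of_orthogonal {n : Type*} [Fintype n] {W : Matrix n n ℝ}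
    (hW : W.IsSymm) {u v : n → ℝ}
    (h : u ⬝ᵥ (W *ᵥ v) = 0) :
    (u + v) ⬝ᵥ (W *ᵥ (u + v)) = u ⬝ᵥ (W *ᵥ u) + v ⬝ᵥ (W *ᵥ v) := by
  have h' : v ⬝ᵥ (W *ᵥ u) = 0 := by
    rw [dotProduct_mulVec, ← mulVec_transpose, hW.eq, dotProduct_comm, h]
  rw [mulVec_add, dotProduct_add, add_dotProduct, add_dotProduct, h, h']
  ring

section WeightedProjection

variable {m n : Type*} [Fintype m] [Fintype n] [DecidableEq m] [DecidableEq n]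
  {W : Matrix n n ℝ} {A : Matrix m n ℝ}

/-- The `W`-orthogonal projection onto `range (W⁻¹ Aᵀ)`, the `W`-orthogonal complement of
`ker A`. -/
noncomputable def wProj (W : Matrix n n ℝ) (A : Matrix m n ℝ) : Matrix n n ℝ :=
  W⁻¹ * Aᵀ * (A * W⁻¹ * Aᵀ)⁻¹ * A

lemma mul_wProj (hM : IsUnit (A * W⁻¹ * Aᵀ)) : A * wProj W A = A :=
  calc A * wProj W A = A * W⁻¹ * Aᵀ * (A * W⁻¹ * Aᵀ)⁻¹ * A := by
        simp only [wProj, Matrix.mul_assoc]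
    _ = A := by rw [mul_nonsing_inv _ ((isUnit_iff_isUnit_det _).mp hM), Matrix.one_mul]

lemma mul_wProj_eq_transpose_mul (hW : IsUnit W.det) :
    W * wProj W A = Aᵀ * ((A * W⁻¹ * Aᵀ)⁻¹ * A) :=
  calc W * wProj W A = W * W⁻¹ * (Aᵀ * ((A * W⁻¹ * Aᵀ)⁻¹ * A)) := by
        simp only [wProj, Matrix.mul_assoc]
    _ = Aᵀ * ((A * W⁻¹ * Aᵀ)⁻¹ * A) := by rw [mul_nonsing_inv _ hW, Matrix.one_mul]

lemma dotProduct_mulVec_wProj_eq_zero (hW : IsUnit W.det) (hM : IsUnit (A * W⁻¹ * Aᵀ))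
    (e : n → ℝ) : (e - wProj W A *ᵥ e) ⬝ᵥ (W *ᵥ (wProj W A *ᵥ e)) = 0 := by
  have hker : A *ᵥ (e - wProj W A *ᵥ e) = 0 := by
    rw [mulVec_sub, mulVec_mulVec, mul_wProj hM, sub_self]
  rw [mulVec_mulVec, mul_wProj_eq_transpose_mul hW, ← mulVec_mulVec, dotProduct_mulVec,
    vecMul_transpose, hker, zero_dotProduct]

lemma wNorm_sub_wProj_mulVec_le (hW : W.PosDef) (hM : IsUnit (A * W⁻¹ * Aᵀ)) (e : n → ℝ) :
    wNorm W (e - wProj W A *ᵥ e) ≤ wNorm W e := by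
  have hWdet : IsUnit W.det := (isUnit_iff_isUnit_det W).mp hW.isUnit
  have hpyth := dotProduct_mulVec_add_of_orthogonal (isHermitian_iff_isSymm.mp hW.isHermitian)
    (dotProduct_mulVec_wProj_eq_zero hWdet hM e)
  rw [sub_add_cancel] at hpyth
  have hproj_nonneg : 0 ≤ (wProj W A *ᵥ e) ⬝ᵥ (W *ᵥ (wProj W A *ᵥ e)) := by
    simpa only [star_trivial] using hW.posSemidef.dotProduct_mulVec_nonneg (wProj W A *ᵥ e)
  exact Real.sqrt_le_sqrt (by linarith)

end WeightedProjection

lemma eNorm_inv_mul_transpose_mul_inv_mulVec_le {m n : Type*} [Fintype m] [Fintype n]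
    [DecidableEq m] [DecidableEq n] {W : Matrix n n ℝ} {M : Matrix m m ℝ} {w μ : ℝ}
    (hW : (W - w • 1).PosSemidef) (hw : 0 < w) (hM : (M - μ • 1).PosSemidef) (hμ : 0 < μ)
    (A : Matrix m n ℝ) (r : m → ℝ) :
    eNorm ((W⁻¹ * Aᵀ * M⁻¹) *ᵥ r) ≤ ‖A‖ * eNorm r / (w * μ) := by
  rw [← mulVec_mulVec, ← mulVec_mulVec, le_div_iff₀ (by positivity)]
  calc eNorm (W⁻¹ *ᵥ (Aᵀ *ᵥ (M⁻¹ *ᵥ r))) * (w * μ)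
      = μ * (w * eNorm (W⁻¹ *ᵥ (Aᵀ *ᵥ (M⁻¹ *ᵥ r)))) := by ring
    _ ≤ μ * eNorm (Aᵀ *ᵥ (M⁻¹ *ᵥ r)) := by gcongr; exact hW.mul_eNorm_inv_mulVec_le hw _
    _ ≤ μ * (‖A‖ * eNorm (M⁻¹ *ᵥ r)) := by gcongr; exact eNorm_transpose_mulVec_le A _
    _ = ‖A‖ * (μ * eNorm (M⁻¹ *ᵥ r)) := by ring
    _ ≤ ‖A‖ * eNorm r := by gcongr; exact hM.mul_eNorm_inv_mulVec_le hμ r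

theorem stmt6_general (m q : ℕ)
    (W : Matrix (Fin q) (Fin q) ℝ) (hW : W.PosDef)
    (wmin : ℝ) (hwmin : 0 < wmin)
    (hlow : (W - wmin • (1 : Matrix (Fin q) (Fin q) ℝ)).PosSemidef)
    (A : Matrix (Fin (m + 1)) (Fin q) ℝ) (a : ℝ) (hA : ‖A‖ ≤ a)
    (M : Matrix (Fin (m + 1)) (Fin (m + 1)) ℝ)
    (hM : M = A * W⁻¹ * Aᵀ)
    (μM : ℝ) (hμM : 0 < μM) (hmin : μM ≤ lambdaMin M)
    (b : Fin (m + 1) → ℝ) (cpi cl : Fin q → ℝ)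
    (r : Fin (m + 1) → ℝ) (hr : r = b - A *ᵥ cl)
    (chat : Fin q → ℝ)
    (hchat : chat = cpi + (W⁻¹ * Aᵀ * M⁻¹) *ᵥ (b - A *ᵥ cpi))
    (κπ ρ Δ : ℝ)
    (hprior : wNorm W (cpi - cl) ≤ κπ * Δ ^ 2)
    (hrbound : eNorm r ≤ ρ) :
    eNorm (chat - cl) ≤ (κπ / Real.sqrt wmin) * Δ ^ 2 + a * ρ / (wmin * μM) := by
  subst hM hr hchat
  have hMlow : (A * W⁻¹ * Aᵀ - μM • 1).PosSemidef := by
    refine sub_smul_one_posSemidef_of_le_lambdaMin ?_ hmin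
    simpa only [conjTranspose_eq_transpose_of_trivial]
      using (hW.inv.posSemidef.mul_mul_conjTranspose_same A).isHermitian
  have hMunit : IsUnit (A * W⁻¹ * Aᵀ) := (hMlow.posDef_of_sub_smul_one hμM).isUnit
  have hsplit : cpi + (W⁻¹ * Aᵀ * (A * W⁻¹ * Aᵀ)⁻¹) *ᵥ (b - A *ᵥ cpi) - cl
      = (cpi - cl - wProj W A *ᵥ (cpi - cl))
        + (W⁻¹ * Aᵀ * (A * W⁻¹ * Aᵀ)⁻¹) *ᵥ (b - A *ᵥ cl) := by
    simp only [wProj, ← mulVec_mulVec, mulVec_sub]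
    abel
  have hprojected : eNorm (cpi - cl - wProj W A *ᵥ (cpi - cl)) ≤ κπ / √wmin * Δ ^ 2 :=
    calc _ ≤ wNorm W (cpi - cl - wProj W A *ᵥ (cpi - cl)) / √wmin :=
          hlow.eNorm_le_wNorm_div_sqrt hwmin _
      _ ≤ κπ * Δ ^ 2 / √wmin := by
          gcongr
          exact (wNorm_sub_wProj_mulVec_le hW hMunit _).trans hprior
      _ = κπ / √wmin * Δ ^ 2 := (div_mul_eq_mul_div ..).symm
  have hcorrection := eNorm_inv_mul_transpose_mul_inv_mulVec_le hlow hwmin hMlow hμM A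
    (b - A *ᵥ cl)
  have hnumerator : ‖A‖ * eNorm (b - A *ᵥ cl) ≤ a * ρ :=
    mul_le_mul hA hrbound (eNorm_nonneg _) ((norm_nonneg A).trans hA)
  rw [hsplit]
  exact (eNorm_add_le _ _).trans (add_le_add hprojected
    (hcorrection.trans (div_le_div_of_nonneg_right hnumerator (by positivity))))

theorem stmt6 (m q : ℕ)
    (W : Matrix (Fin q) (Fin q) ℝ) (hW : W.PosDef)
    (wmin : ℝ) (hwmin : 0 < wmin)
    (hlow : (W - wmin • (1 : Matrix (Fin q) (Fin q) ℝ)).PosSemidef)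
    (A : Matrix (Fin (m + 1)) (Fin q) ℝ) (a : ℝ) (hA : ‖A‖ ≤ a)
    (M : Matrix (Fin (m + 1)) (Fin (m + 1)) ℝ)
    (hM : M = A * W⁻¹ * Aᵀ)
    (μM : ℝ) (hμM : 0 < μM) (hmin : μM ≤ lambdaMin M)
    (b : Fin (m + 1) → ℝ) (cpi cl : Fin q → ℝ)
    (r : Fin (m + 1) → ℝ) (hr : r = b - A *ᵥ cl)
    (chat : Fin q → ℝ)
    (hchat : chat = cpi + (W⁻¹ * Aᵀ * M⁻¹) *ᵥ (b - A *ᵥ cpi))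
    (κπ ρ Δ : ℝ) (hκπ : 0 ≤ κπ) (hρ : 0 ≤ ρ) (hΔ : 0 < Δ)
    (hprior : wNorm W (cpi - cl) ≤ κπ * Δ ^ 2)
    (hrbound : eNorm r ≤ ρ) :
    eNorm (chat - cl) ≤ (κπ / Real.sqrt wmin) * Δ ^ 2 + a * ρ / (wmin * μM) :=
  stmt6_general m q W hW wmin hwmin hlow A a hA M hM μM hμM hmin b cpi cl r hr chat hchat κπ ρ Δ
    hprior hrbound
end

section
/- Let n ≥ 1 and let G ∈ ℝ^{(2n+1)×(2n+1)} be the Gram matrix of the 2n+1 row vectors r₀ := (1, 0, 0), r_{+i} := (1, e_i, (1/2)e_i), r_{−i} := (1, −e_i, (1/2)e_i) ∈ ℝ^{1+n+n} (i = 1,…,n). Then the smallest eigenvalue of G satisfies λ_min(G) ≥ 1/(4n+3). -/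
open Matrix

/-- Index set `{0, +1, …, +n, −1, …, −n}` for the fallback points. -/
abbrev Idx (n : ℕ) := Unit ⊕ Fin n ⊕ Fin n

/-- The rows `r₀ = (1,0,0)`, `r_{+i} = (1, eᵢ, ½eᵢ)`, `r_{−i} = (1, −eᵢ, ½eᵢ)` in `ℝ^{1+n+n}`. -/
noncomputable def rvec (n : ℕ) : Idx n → Idx n → ℝ
  | Sum.inl _ => Sum.elim (fun _ => 1) (Sum.elim (fun _ => 0) fun _ => 0)
  | Sum.inr (Sum.inl i) =>
      Sum.elim (fun _ => 1)
        (Sum.elim (fun j => if j = i then 1 else 0) fun j => if j = i then 1 / 2 else 0)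
  | Sum.inr (Sum.inr i) =>
      Sum.elim (fun _ => 1)
        (Sum.elim (fun j => if j = i then -1 else 0) fun j => if j = i then 1 / 2 else 0)

/-- The Gram matrix `G_{ab} = r_aᵀ r_b` of the vectors `rvec`. -/
noncomputable def gram (n : ℕ) : Matrix (Idx n) (Idx n) ℝ :=
  Matrix.of fun a b => rvec n a ⬝ᵥ rvec n b

/-!
Writing `G = R Rᵀ` for the matrix `R` with rows `r_a`, the quadratic form is `xᵀGx = ‖Rᵀx‖²`.
In the coordinates `t = x₀`, `dⱼ = x₊ⱼ - x₋ⱼ`, `sⱼ = x₊ⱼ + x₋ⱼ` this is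
`(t + Σ sⱼ)² + Σ dⱼ² + ¼ Σ sⱼ²`, while `‖x‖² = t² + ½ (Σ dⱼ² + Σ sⱼ²)`. Cauchy–Schwarz,
`(Σ sⱼ)² ≤ n Σ sⱼ²`, and Young's inequality `t² ≤ (4n+1)(t+S)² + (1 + 1/(4n)) S²` for `S = Σ sⱼ` then bound
`‖x‖²` by `(4n+3) xᵀGx`.
-/

theorem le_lambdaMin_of_forall_le_dotProduct_mulVec {ι : Type*} [Fintype ι] [DecidableEq ι]
    [Nonempty ι] {M : Matrix ι ι ℝ} (hM : M.IsHermitian) {c : ℝ}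
    (h : ∀ x : ι → ℝ, c * (x ⬝ᵥ x) ≤ x ⬝ᵥ (M *ᵥ x)) : c ≤ lambdaMin M := by
  rw [lambdaMin, dif_pos hM]
  refine le_ciInf fun i => ?_
  set v : ι → ℝ := ⇑(hM.eigenvectorBasis i)
  have hv : 0 < v ⬝ᵥ v := by
    simpa using dotProduct_star_self_pos_iff.mpr <|
      (WithLp.ofLp_eq_zero 2).ne.mpr (hM.eigenvectorBasis.orthonormal.ne_zero i)
  have hcv := h v
  rw [hM.mulVec_eigenvectorBasis i, dotProduct_smul, smul_eq_mul] at hcv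
  exact le_of_mul_le_mul_right hcv hv

theorem sq_le_of_sq_le_mul {m t S B : ℝ} (hm : 0 ≤ m) (hB : 0 ≤ B) (hS : S ^ 2 ≤ m * B) :
    t ^ 2 ≤ (4 * m + 1) * ((t + S) ^ 2 + B / 4) := by
  rcases hm.eq_or_lt with rfl | hm
  · nlinarith [sq_nonneg S]
  · -- Young's inequality with weight `4m`: the difference is `(4m(t+S) + S)²`.
    have key : 4 * m * t ^ 2 ≤ 4 * m * ((4 * m + 1) * ((t + S) ^ 2 + B / 4)) := by
      nlinarith [sq_nonneg (4 * m * (t + S) + S)]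
    exact le_of_mul_le_mul_left key (by positivity)

theorem gram_eq_mul_transpose (n : ℕ) : gram n = of (rvec n) * (of (rvec n))ᵀ :=
  rfl

theorem gram_isHermitian (n : ℕ) : (gram n).IsHermitian := by
  simpa [gram_eq_mul_transpose] using (posSemidef_self_mul_conjTranspose (of (rvec n))).isHermitian

theorem vecMul_rvec (n : ℕ) (x : Idx n → ℝ) :
    x ᵥ* of (rvec n) =
      Sum.elim (fun _ => x (.inl ()) + ∑ i, (x (.inr (.inl i)) + x (.inr (.inr i))))
        (Sum.elim (fun j => x (.inr (.inl j)) - x (.inr (.inr j)))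
          fun j => (x (.inr (.inl j)) + x (.inr (.inr j))) / 2) := by
  ext (_ | j | j) <;>
    simp [vecMul, dotProduct, Fintype.sum_sum_type, rvec, Finset.sum_add_distrib, sub_eq_add_neg]
  ring

theorem dotProduct_gram_mulVec (n : ℕ) (x : Idx n → ℝ) :
    x ⬝ᵥ (gram n *ᵥ x) =
      (x (.inl ()) + ∑ i, (x (.inr (.inl i)) + x (.inr (.inr i)))) ^ 2
      + ∑ j, (x (.inr (.inl j)) - x (.inr (.inr j))) ^ 2
      + (∑ j, (x (.inr (.inl j)) + x (.inr (.inr j))) ^ 2) / 4 := by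
  rw [gram_eq_mul_transpose, ← mulVec_mulVec, dotProduct_mulVec, mulVec_transpose, vecMul_rvec]
  norm_num [dotProduct, Fintype.sum_sum_type, Finset.sum_div, div_pow, ← sq, add_assoc]

theorem dotProduct_self_idx_eq (n : ℕ) (x : Idx n → ℝ) :
    x ⬝ᵥ x = x (.inl ()) ^ 2 +
      (∑ j, (x (.inr (.inl j)) - x (.inr (.inr j))) ^ 2
        + ∑ j, (x (.inr (.inl j)) + x (.inr (.inr j))) ^ 2) / 2 := by
  simp only [dotProduct, Fintype.sum_sum_type, Finset.univ_unique, Finset.sum_singleton,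
    ← Finset.sum_add_distrib, Finset.sum_div]
  congr 1
  · ring
  · exact Finset.sum_congr rfl fun j _ => by ring

theorem one_div_mul_dotProduct_self_le_dotProduct_gram_mulVec (n : ℕ) (x : Idx n → ℝ) :
    1 / (4 * n + 3 : ℝ) * (x ⬝ᵥ x) ≤ x ⬝ᵥ (gram n *ᵥ x) := by
  rw [dotProduct_gram_mulVec, dotProduct_self_idx_eq, one_div, inv_mul_le_iff₀ (by positivity)]
  set s : Fin n → ℝ := fun j => x (.inr (.inl j)) + x (.inr (.inr j))
  set A := ∑ j, (x (.inr (.inl j)) - x (.inr (.inr j))) ^ 2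
  have hA : 0 ≤ A := Finset.sum_nonneg fun _ _ => sq_nonneg _
  have hB : 0 ≤ ∑ j, s j ^ 2 := Finset.sum_nonneg fun _ _ => sq_nonneg _
  have hCS : (∑ j, s j) ^ 2 ≤ n * ∑ j, s j ^ 2 := by
    simpa using sq_sum_le_card_mul_sum_sq (s := Finset.univ) (f := s)
  have hYoung := sq_le_of_sq_le_mul (t := x (.inl ())) n.cast_nonneg hB hCS
  nlinarith [hYoung, mul_nonneg (n.cast_nonneg : (0 : ℝ) ≤ n) hA]

theorem stmt12_general (n : ℕ) :
    1 / (4 * n + 3) ≤ lambdaMin (gram n) :=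
  le_lambdaMin_of_forall_le_dotProduct_mulVec (gram_isHermitian n)
    (one_div_mul_dotProduct_self_le_dotProduct_gram_mulVec n)

theorem stmt12 (n : ℕ) (hn : 1 ≤ n) :
    1 / (4 * n + 3) ≤ lambdaMin (gram n) :=
  stmt12_general n
end

section
/- Let f : ℝⁿ → ℝ, x ∈ ℝⁿ, Δ > 0, η₁ ∈ (0,1), and let m : ℝⁿ → ℝ satisfy m(0) = f(x) and |f(x+s) − m(s)| ≤ κ_f Δ² for all ‖s‖₂ ≤ Δ, with κ_f > 0. Let s_k with ‖s_k‖₂ ≤ Δ be such that pred := m(0) − m(s_k) > 0. If Δ ≤ √((1 − η₁) · pred / κ_f), then ρ := (f(x) − f(x + s_k)) / pred ≥ η₁. -/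
theorem stmt15 (n : ℕ) (f : EuclideanSpace ℝ (Fin n) → ℝ)
    (x : EuclideanSpace ℝ (Fin n)) (Δ : ℝ) (hΔ : 0 < Δ)
    (η₁ : ℝ) (hη₁ : η₁ ∈ Set.Ioo (0 : ℝ) 1)
    (m : EuclideanSpace ℝ (Fin n) → ℝ) (κf : ℝ) (hκf : 0 < κf)
    (hm0 : m 0 = f x)
    (hfl : ∀ s : EuclideanSpace ℝ (Fin n), ‖s‖ ≤ Δ → |f (x + s) - m s| ≤ κf * Δ ^ 2)
    (sk : EuclideanSpace ℝ (Fin n)) (hsk : ‖sk‖ ≤ Δ)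
    (hpred : 0 < m 0 - m sk)
    (hΔsmall : Δ ≤ Real.sqrt ((1 - η₁) * (m 0 - m sk) / κf)) :
    η₁ ≤ (f x - f (x + sk)) / (m 0 - m sk) := by
  obtain ⟨hη0, hη1⟩ := hη₁
  have harg : 0 ≤ (1 - η₁) * (m 0 - m sk) / κf := by
    have : 0 ≤ 1 - η₁ := by linarith
    positivity
  have hΔ2 : Δ ^ 2 ≤ (1 - η₁) * (m 0 - m sk) / κf := by
    have := Real.sq_sqrt harg
    nlinarith [Real.sqrt_nonneg ((1 - η₁) * (m 0 - m sk) / κf)]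
  have hκΔ : κf * Δ ^ 2 ≤ (1 - η₁) * (m 0 - m sk) := by
    rw [div_eq_mul_inv] at hΔ2
    calc κf * Δ ^ 2 ≤ κf * ((1 - η₁) * (m 0 - m sk) * κf⁻¹) := by
          exact mul_le_mul_of_nonneg_left hΔ2 hκf.le
      _ = (1 - η₁) * (m 0 - m sk) := by field_simp
  have habs := hfl sk hsk
  have h1 : f (x + sk) - m sk ≤ κf * Δ ^ 2 := (abs_le.mp habs).2
  rw [le_div_iff₀ hpred]
  nlinarith [h1]
end

section
/- Let f : ℝⁿ → ℝ, x ∈ ℝⁿ, Δ > 0, η₁ ∈ (0,1), and let m(s) = f(x) + gᵀs + (1/2) sᵀ H s be a quadratic model with g ∈ ℝⁿ, H symmetric, ‖H‖₂ ≤ H_max for some H_max > 0. Assume m is fully linear: |f(x+s) − m(s)| ≤ κ_f Δ² and ‖∇f(x+s) − ∇m(s)‖₂ ≤ κ_g Δ for all ‖s‖₂ ≤ Δ, with κ_f, κ_g > 0. Let s_k satisfy ‖s_k‖₂ ≤ Δ and the Cauchy decrease condition pred := m(0) − m(s_k) ≥ (1/2)‖g‖₂ min{Δ, ‖g‖₂/‖H‖₂}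 (with ‖g‖₂/‖H‖₂ := +∞ when H = 0). Fix ε ∈ (0,1]. If ‖∇f(x)‖₂ ≥ ε and Δ ≤ min{ε/(2κ_g), ε/(2H_max), (1−η₁)ε/(4κ_f), 1}, then pred > 0 and ρ := (f(x) − f(x + s_k)) / pred ≥ η₁. -/
/-! Full linearity at `s = 0` gives `‖g‖ ≥ ε / 2`, and the bound on `Δ` makes the Cauchy
step a full step to the boundary, so `pred ≥ ε Δ / 4`. The actual and predicted reductions differ by
`f (x + sₖ) - m sₖ`, which is at most `κ_f Δ²` and therefore at most `(1 - η₁) pred` once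
`Δ ≤ (1 - η₁) ε / (4 κ_f)`. -/

open Matrix
open scoped Matrix.Norms.L2Operator RealInnerProductSpace

section OrderedField

variable {K : Type*} [Field K] [LinearOrder K] [IsStrictOrderedRing K]

lemma mul_le_of_le_div_of_nonneg {a b c : K} (ha : 0 ≤ a) (hb : 0 ≤ b) (h : a ≤ b / c) :
    c * a ≤ b := by
  rcases le_or_gt c 0 with hc | hc
  · exact (mul_nonpos_of_nonpos_of_nonneg hc ha).trans hb
  · rw [mul_comm]
    exact mul_le_of_le_div₀ hb hc.le h

lemma le_sub_div_self {η p e : K} (hp : 0 < p) (he : e ≤ (1 - η) * p) :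
    η ≤ (p - e) / p := by
  rw [le_div_iff₀ hp]
  linarith

end OrderedField

lemma le_ite_min_div {E : Type*} [NormedAddCommGroup E] {H : E} [Decidable (H = 0)]
    {Δ a : ℝ} (hHΔ : ‖H‖ * Δ ≤ a) : Δ ≤ if H = 0 then Δ else min Δ (a / ‖H‖) := by
  split_ifs with hH
  · exact le_rfl
  · exact le_min le_rfl ((le_div_iff₀' (norm_pos_iff.mpr hH)).mpr hHΔ)

theorem stmt16_general (n : ℕ) (f : EuclideanSpace ℝ (Fin n) → ℝ)
    (x : EuclideanSpace ℝ (Fin n)) (Δ : ℝ) (hΔ : 0 < Δ)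
    (η₁ : ℝ) (hη₁ : η₁ ∈ Set.Ioo (0 : ℝ) 1)
    (g : EuclideanSpace ℝ (Fin n)) (H : Matrix (Fin n) (Fin n) ℝ)
    (Hmax : ℝ) (hHb : ‖H‖ ≤ Hmax)
    (m : EuclideanSpace ℝ (Fin n) → ℝ)
    (hm : m = fun s => f x + ⟪g, s⟫ + (1 / 2) * ⟪s, Matrix.toEuclideanLin H s⟫)
    (κf κg : ℝ)
    (hfl1 : ∀ s : EuclideanSpace ℝ (Fin n), ‖s‖ ≤ Δ → |f (x + s) - m s| ≤ κf * Δ ^ 2)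
    (hfl2 : ∀ s : EuclideanSpace ℝ (Fin n), ‖s‖ ≤ Δ →
      ‖gradient f (x + s) - (g + Matrix.toEuclideanLin H s)‖ ≤ κg * Δ)
    (sk : EuclideanSpace ℝ (Fin n)) (hsk : ‖sk‖ ≤ Δ)
    (hcauchy : (1 / 2) * ‖g‖ * (if H = 0 then Δ else min Δ (‖g‖ / ‖H‖)) ≤ m 0 - m sk)
    (ε : ℝ) (hε : ε ∈ Set.Ioc (0 : ℝ) 1)
    (hgrad : ε ≤ ‖gradient f x‖)
    (hΔsmall : Δ ≤ min (min (ε / (2 * κg)) (ε / (2 * Hmax)))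
      (min ((1 - η₁) * ε / (4 * κf)) 1)) :
    0 < m 0 - m sk ∧ η₁ ≤ (f x - f (x + sk)) / (m 0 - m sk) := by
  obtain ⟨hε, -⟩ := hε
  simp only [le_min_iff] at hΔsmall
  obtain ⟨⟨hΔg, hΔH⟩, hΔf, -⟩ := hΔsmall
  have hκg : 2 * κg * Δ ≤ ε := mul_le_of_le_div_of_nonneg hΔ.le hε.le hΔg
  have hHΔ : 2 * Hmax * Δ ≤ ε := mul_le_of_le_div_of_nonneg hΔ.le hε.le hΔH
  have hκf : 4 * κf * Δ ≤ (1 - η₁) * ε :=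
    mul_le_of_le_div_of_nonneg hΔ.le (by nlinarith [hη₁.2]) hΔf
  have hg : ε / 2 ≤ ‖g‖ := by
    have h0 := hfl2 0 (by simpa using hΔ.le)
    simp only [add_zero, map_zero] at h0
    linarith [norm_sub_norm_le (gradient f x) g]
  have hpred : ε * Δ / 4 ≤ m 0 - m sk := by
    have hstep : Δ ≤ if H = 0 then Δ else min Δ (‖g‖ / ‖H‖) :=
      le_ite_min_div (by linarith [mul_le_mul_of_nonneg_right hHb hΔ.le])
    calc ε * Δ / 4 = 1 / 2 * (ε / 2) * Δ := by ring
      _ ≤ _ := by gcongr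
      _ ≤ m 0 - m sk := hcauchy
  have hpos : 0 < m 0 - m sk := lt_of_lt_of_le (by positivity) hpred
  have herr : f (x + sk) - m sk ≤ (1 - η₁) * (m 0 - m sk) := by
    have hmodel := (le_abs_self _).trans (hfl1 sk hsk)
    nlinarith [hη₁.2]
  have hactual : f x - f (x + sk) = (m 0 - m sk) - (f (x + sk) - m sk) := by
    rw [show m 0 = f x by simp [hm]]
    ring
  exact ⟨hpos, hactual ▸ le_sub_div_self hpos herr⟩

theorem stmt16 (n : ℕ) (f : EuclideanSpace ℝ (Fin n) → ℝ)
    (x : EuclideanSpace ℝ (Fin n)) (Δ : ℝ) (hΔ : 0 < Δ)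
    (η₁ : ℝ) (hη₁ : η₁ ∈ Set.Ioo (0 : ℝ) 1)
    (g : EuclideanSpace ℝ (Fin n)) (H : Matrix (Fin n) (Fin n) ℝ) (hH : H.IsSymm)
    (Hmax : ℝ) (hHmax : 0 < Hmax) (hHb : ‖H‖ ≤ Hmax)
    (m : EuclideanSpace ℝ (Fin n) → ℝ)
    (hm : m = fun s => f x + ⟪g, s⟫ + (1 / 2) * ⟪s, Matrix.toEuclideanLin H s⟫)
    (κf κg : ℝ) (hκf : 0 < κf) (hκg : 0 < κg)
    (hfl1 : ∀ s : EuclideanSpace ℝ (Fin n), ‖s‖ ≤ Δ → |f (x + s) - m s| ≤ κf * Δ ^ 2)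
    (hfl2 : ∀ s : EuclideanSpace ℝ (Fin n), ‖s‖ ≤ Δ →
      ‖gradient f (x + s) - (g + Matrix.toEuclideanLin H s)‖ ≤ κg * Δ)
    (sk : EuclideanSpace ℝ (Fin n)) (hsk : ‖sk‖ ≤ Δ)
    (hcauchy : (1 / 2) * ‖g‖ * (if H = 0 then Δ else min Δ (‖g‖ / ‖H‖)) ≤ m 0 - m sk)
    (ε : ℝ) (hε : ε ∈ Set.Ioc (0 : ℝ) 1)
    (hgrad : ε ≤ ‖gradient f x‖)
    (hΔsmall : Δ ≤ min (min (ε / (2 * κg)) (ε / (2 * Hmax)))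
      (min ((1 - η₁) * ε / (4 * κf)) 1)) :
    0 < m 0 - m sk ∧ η₁ ≤ (f x - f (x + sk)) / (m 0 - m sk) :=
  stmt16_general n f x Δ hΔ η₁ hη₁ g H Hmax hHb m hm κf κg hfl1 hfl2 sk hsk hcauchy ε hε hgrad
    hΔsmall
end

section
/- Let f : ℝⁿ → ℝ be continuously differentiable with L_g-Lipschitz gradient and bounded below by f_inf ∈ ℝ. Fix constants η₁ ∈ (0,1), 0 < γ_dec < 1 < γ_inc, Δ_max > 0, κ_f, κ_g, κ_Δ, H_max > 0. Let (x_k) ⊂ ℝⁿ, (Δ_k) ⊂ (0, Δ_max], (g_k) ⊂ ℝⁿ, symmetric matrices (H_k) with ‖H_k‖₂ ≤ H_max, and steps (s_k) with ‖s_k‖₂ ≤ Δ_k be sequences such that for every k, with m_k(s) := f(x_k) + g_kᵀ s + (1/2) sᵀ H_k s: (i) |f(x_k + s) − m_k(s)| ≤ κ_f Δ_k² and ‖∇f(x_k + s) − ∇m_k(s)‖₂ ≤ κ_g Δ_k for all ‖s‖₂ ≤ Δ_k; (ii) ‖g_k‖₂ > κ_Δ Δ_k; (iii) pred_k := m_k(0)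 − m_k(s_k) ≥ (1/2) ‖g_k‖₂ min{Δ_k, ‖g_k‖₂ / ‖H_k‖₂} (with the convention ‖g_k‖₂/‖H_k‖₂ := +∞ when H_k = 0); (iv) if ρ_k := (f(x_k) − f(x_k + s_k)) / pred_k ≥ η₁ then x_{k+1} = x_k + s_k and Δ_k ≤ Δ_{k+1} ≤ min{γ_inc Δ_k, Δ_max}, while if ρ_k < η₁ then x_{k+1} = x_k and Δ_{k+1} = γ_dec Δ_k. Then liminf_{k→∞} ‖∇f(x_k)‖₂ = 0. -/
/-!
Suppose `‖∇f(x_k)‖ ≥ ε` for all large `k`. Since `g_k` approximates `∇f(x_k)` to within `κ_g Δ_k`,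
a small radius forces `‖g_k‖ ≥ ε/2`, and then the model error `κ_f Δ_k²` is a small fraction of the
Cauchy decrease `≳ ε Δ_k`, so `ρ_k ≥ η₁`: small radii are never shrunk, hence `Δ_k` stays above some
`δ > 0`. Shrinking by `γ_dec < 1` therefore cannot go on forever, so infinitely many steps succeed,
and by the criticality bound `‖g_k‖ > κ_Δ Δ_k ≥ κ_Δ δ` each of them lowers `f` by a fixed amount,
contradicting `f ≥ f_inf`.
-/

open Matrix Filter
open scoped Matrix.Norms.L2Operator RealInnerProductSpace Topology

lemma half_mul_min_div_le_of_norm_le {E : Type*} [NormedAddCommGroup E] (A : E)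
    [Decidable (A = 0)] {a Δ Hmax : ℝ} (ha : 0 ≤ a) (hA : ‖A‖ ≤ Hmax) :
    1 / 2 * a * min Δ (a / Hmax) ≤ 1 / 2 * a * (if A = 0 then Δ else min Δ (a / ‖A‖)) := by
  split_ifs with h
  · gcongr
    exact min_le_left _ _
  · gcongr

lemma liminf_eq_zero_of_frequently_lt {u : ℕ → ℝ} (hu : ∀ k, 0 ≤ u k)
    (h : ∀ ε > 0, ∃ᶠ k in atTop, u k < ε) : liminf u atTop = 0 := by
  have hbdd : IsBoundedUnder (· ≥ ·) atTop u := isBoundedUnder_of ⟨0, hu⟩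
  refine le_antisymm (le_of_forall_pos_le_add fun ε hε => ?_) ?_
  · linarith [liminf_le_of_frequently_le ((h ε hε).mono fun k hk => hk.le) hbdd]
  · exact le_liminf_of_le (IsCoboundedUnder.of_frequently_le ((h 1 one_pos).mono fun k hk => hk.le))
      (Eventually.of_forall hu)

lemma Antitone.not_frequently_le_sub {u : ℕ → ℝ} (hu : Antitone u) (hbdd : BddBelow (Set.range u))
    {c : ℝ} (hc : 0 < c) : ¬ ∃ᶠ k in atTop, u (k + 1) ≤ u k - c := by
  have hlim := tendsto_atTop_ciInf hu hbdd
  have hstep : Tendsto (fun k => u k - u (k + 1)) atTop (𝓝 0) := by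
    simpa using hlim.sub (hlim.comp (tendsto_add_atTop_nat 1))
  rw [not_frequently]
  filter_upwards [hstep.eventually (gt_mem_nhds hc)] with k hk
  linarith

section RadiusUpdate

variable {Δ : ℕ → ℝ} {P : ℕ → Prop} {γ : ℝ}

lemma min_le_of_forall_le_imp {δ : ℝ} {K : ℕ} (hγ : 0 ≤ γ) (hsmall : ∀ k ≥ K, Δ k ≤ δ → P k)
    (hinc : ∀ k, P k → Δ k ≤ Δ (k + 1)) (hdec : ∀ k, ¬ P k → Δ (k + 1) = γ * Δ k) :
    ∀ k ≥ K, min (Δ K) (γ * δ) ≤ Δ k := by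
  intro k hk
  induction k, hk using Nat.le_induction with
  | base => exact min_le_left _ _
  | succ k hk ih =>
    by_cases hP : P k
    · exact ih.trans (hinc k hP)
    · have hδ : δ < Δ k := lt_of_not_ge fun h => hP (hsmall k hk h)
      rw [hdec k hP]
      exact (min_le_right _ _).trans (by gcongr)

lemma frequently_of_eventually_ge {δ : ℝ} (hδ : 0 < δ) (hγ0 : 0 ≤ γ) (hγ1 : γ < 1)
    (hlb : ∀ᶠ k in atTop, δ ≤ Δ k) (hdec : ∀ k, ¬ P k → Δ (k + 1) = γ * Δ k) :
    ∃ᶠ k in atTop, P k := by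
  by_contra h
  obtain ⟨K, hK⟩ := eventually_atTop.1 ((not_frequently.1 h).and hlb)
  have hgeom : ∀ m, Δ (K + m) = γ ^ m * Δ K := by
    intro m
    induction m with
    | zero => simp
    | succ m ih =>
      rw [← add_assoc, hdec _ (hK _ (Nat.le_add_right K m)).1, ih]
      ring
  have hzero : Tendsto (fun m => γ ^ m * Δ K) atTop (𝓝 0) := by
    simpa using (tendsto_pow_atTop_nhds_zero_of_lt_one hγ0 hγ1).mul_const (Δ K)
  obtain ⟨m, hm⟩ := (hzero.eventually (gt_mem_nhds hδ)).exists
  have := (hK (K + m) (Nat.le_add_right K m)).2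
  rw [hgeom] at this
  linarith

end RadiusUpdate

namespace TrustRegion

lemma pred_pos {a Δ pred κΔ Hmax : ℝ} (hΔ : 0 < Δ) (hκΔ : 0 < κΔ) (hHmax : 0 < Hmax)
    (ha : κΔ * Δ < a) (hpred : 1 / 2 * a * min Δ (a / Hmax) ≤ pred) : 0 < pred := by
  have ha0 : 0 < a := (mul_pos hκΔ hΔ).trans ha
  have : 0 < min Δ (a / Hmax) := lt_min hΔ (div_pos ha0 hHmax)
  exact hpred.trans_lt' (by positivity)

lemma le_ratio_of_small_radius {a Δ ared pred η κf Hmax ε : ℝ} (hΔ : 0 < Δ) (hHmax : 0 < Hmax)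
    (hη : η ≤ 1) (hpred : 1 / 2 * a * min Δ (a / Hmax) ≤ pred)
    (hared : |ared - pred| ≤ κf * Δ ^ 2) (ha : ε / 2 ≤ a) (hHΔ : Hmax * Δ < ε / 2)
    (hκfΔ : κf * Δ < (1 - η) * ε / 4) : η ≤ ared / pred := by
  have hmin : min Δ (a / Hmax) = Δ := min_eq_left ((le_div_iff₀ hHmax).2 (by linarith))
  rw [hmin] at hpred
  have hpred' : ε / 4 * Δ ≤ pred := by nlinarith
  have hpos : 0 < pred := hpred'.trans_lt' (by nlinarith)
  have herr : κf * Δ ^ 2 ≤ (1 - η) * pred :=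
    calc κf * Δ ^ 2 = κf * Δ * Δ := by ring
      _ ≤ (1 - η) * ε / 4 * Δ := by gcongr
      _ = (1 - η) * (ε / 4 * Δ) := by ring
      _ ≤ (1 - η) * pred := by gcongr
  rw [le_div_iff₀ hpos]
  linarith [abs_le.1 hared]

variable {F G a Δ ared pred : ℕ → ℝ} {η γ κf κg κΔ Hmax : ℝ}

lemma exists_radius_forall_le_ratio (hΔ : ∀ k, 0 < Δ k) (hHmax : 0 < Hmax) (hη : η < 1)
    (hpred : ∀ k, 1 / 2 * a k * min (Δ k) (a k / Hmax) ≤ pred k)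
    (hared : ∀ k, |ared k - pred k| ≤ κf * Δ k ^ 2) (hG : ∀ k, G k ≤ a k + κg * Δ k)
    {ε : ℝ} (hε : 0 < ε) :
    ∃ δ > 0, ∀ k, ε ≤ G k → Δ k ≤ δ → η ≤ ared k / pred k := by
  have hsmall : ∀ c d : ℝ, 0 < d → ∀ᶠ t in 𝓝 (0 : ℝ), c * t < d := fun c d hd =>
    (continuous_const.mul continuous_id).tendsto' 0 0 (by simp) |>.eventually (gt_mem_nhds hd)
  have hη' : 0 < (1 - η) * ε / 4 := by have := sub_pos.2 hη; positivity
  obtain ⟨r, hr, hball⟩ := Metric.eventually_nhds_iff.1 ((hsmall κg (ε / 2) (by positivity)).and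
    ((hsmall Hmax (ε / 2) (by positivity)).and (hsmall κf _ hη')))
  refine ⟨r / 2, by positivity, fun k hGk hΔk => ?_⟩
  obtain ⟨hκg, hHΔ, hκf⟩ := hball (show dist (Δ k) 0 < r by
    rw [Real.dist_0_eq_abs, abs_of_pos (hΔ k)]; linarith)
  exact le_ratio_of_small_radius (hΔ k) hHmax hη.le (hpred k) (hared k) (by linarith [hG k])
    hHΔ hκf

theorem frequently_lt (hΔ : ∀ k, 0 < Δ k) (hη0 : 0 < η) (hη1 : η < 1) (hγ0 : 0 < γ)
    (hγ1 : γ < 1) (hκΔ : 0 < κΔ) (hHmax : 0 < Hmax)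
    (hpred : ∀ k, 1 / 2 * a k * min (Δ k) (a k / Hmax) ≤ pred k)
    (hared : ∀ k, |ared k - pred k| ≤ κf * Δ k ^ 2) (hG : ∀ k, G k ≤ a k + κg * Δ k)
    (ha : ∀ k, κΔ * Δ k < a k)
    (hsucc : ∀ k, η ≤ ared k / pred k → F (k + 1) = F k - ared k ∧ Δ k ≤ Δ (k + 1))
    (hfail : ∀ k, ared k / pred k < η → F (k + 1) = F k ∧ Δ (k + 1) = γ * Δ k)
    (hF : BddBelow (Set.range F)) {ε : ℝ} (hε : 0 < ε) :
    ∃ᶠ k in atTop, G k < ε := by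
  have hpos : ∀ k, 0 < pred k := fun k => pred_pos (hΔ k) hκΔ hHmax (ha k) (hpred k)
  have hdecrease : ∀ k, η ≤ ared k / pred k → F (k + 1) ≤ F k - η * pred k := fun k h => by
    linarith [(hsucc k h).1, (le_div_iff₀ (hpos k)).1 h]
  have hdec : ∀ k, ¬ η ≤ ared k / pred k → Δ (k + 1) = γ * Δ k := fun k h =>
    (hfail k (not_le.1 h)).2
  have hanti : Antitone F := antitone_nat_of_succ_le fun k => by
    by_cases h : η ≤ ared k / pred k
    · linarith [hdecrease k h, mul_pos hη0 (hpos k)]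
    · exact (hfail k (not_le.1 h)).1.le
  by_contra hcon
  obtain ⟨K, hK⟩ := eventually_atTop.1 (not_frequently.1 hcon)
  obtain ⟨δ, hδ, hδsucc⟩ := exists_radius_forall_le_ratio hΔ hHmax hη1 hpred hared hG hε
  set δm := min (Δ K) (γ * δ)
  have hδm : 0 < δm := lt_min (hΔ K) (mul_pos hγ0 hδ)
  have hlb : ∀ k ≥ K, δm ≤ Δ k := min_le_of_forall_le_imp hγ0.le
    (fun k hk => hδsucc k (not_lt.1 (hK k hk))) (fun k h => (hsucc k h).2) hdec
  set c := η * (1 / 2 * (κΔ * δm) * min δm (κΔ * δm / Hmax))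
  have hc : 0 < c := by have := lt_min hδm (div_pos (mul_pos hκΔ hδm) hHmax); positivity
  refine hanti.not_frequently_le_sub hF hc ?_
  have hfreq := frequently_of_eventually_ge hδm hγ0.le hγ1 (eventually_atTop.2 ⟨K, hlb⟩) hdec
  refine (hfreq.and_eventually (eventually_ge_atTop K)).mono fun k ⟨hk, hKk⟩ =>
    (hdecrease k hk).trans ?_
  have hak : κΔ * δm ≤ a k := (mul_le_mul_of_nonneg_left (hlb k hKk) hκΔ.le).trans (ha k).le
  have hpred_ge : 1 / 2 * (κΔ * δm) * min δm (κΔ * δm / Hmax) ≤ pred k := by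
    refine le_trans ?_ (hpred k)
    gcongr
    exacts [by linarith [mul_pos hκΔ hδm], hlb k hKk]
  exact sub_le_sub_left (mul_le_mul_of_nonneg_left hpred_ge hη0.le) _

end TrustRegion

theorem stmt18_general (n : ℕ)
    (f : EuclideanSpace ℝ (Fin n) → ℝ)
    (finf : ℝ) (hbdd : ∀ z, finf ≤ f z)
    (η₁ γdec γinc Δmax κf κg κΔ Hmax : ℝ)
    (hη₁ : η₁ ∈ Set.Ioo (0 : ℝ) 1) (hγdec0 : 0 < γdec) (hγdec1 : γdec < 1)
    (hκΔ : 0 < κΔ) (hHmax : 0 < Hmax)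
    (x : ℕ → EuclideanSpace ℝ (Fin n)) (Δ : ℕ → ℝ)
    (g : ℕ → EuclideanSpace ℝ (Fin n)) (H : ℕ → Matrix (Fin n) (Fin n) ℝ)
    (s : ℕ → EuclideanSpace ℝ (Fin n))
    (hΔpos : ∀ k, 0 < Δ k)
    (hHb : ∀ k, ‖H k‖ ≤ Hmax)
    (hs : ∀ k, ‖s k‖ ≤ Δ k)
    (mdl : ℕ → EuclideanSpace ℝ (Fin n) → ℝ)
    (hmdl : mdl = fun k v => f (x k) + ⟪g k, v⟫ +
      (1 / 2) * ⟪v, Matrix.toEuclideanLin (H k) v⟫)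
    (hfl1 : ∀ k, ∀ v : EuclideanSpace ℝ (Fin n), ‖v‖ ≤ Δ k →
      |f (x k + v) - mdl k v| ≤ κf * Δ k ^ 2)
    (hfl2 : ∀ k, ∀ v : EuclideanSpace ℝ (Fin n), ‖v‖ ≤ Δ k →
      ‖gradient f (x k + v) - (g k + Matrix.toEuclideanLin (H k) v)‖ ≤ κg * Δ k)
    (hg : ∀ k, κΔ * Δ k < ‖g k‖)
    (hpred : ∀ k, (1 / 2) * ‖g k‖ *
      (if H k = 0 then Δ k else min (Δ k) (‖g k‖ / ‖H k‖)) ≤ mdl k 0 - mdl k (s k))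
    (hupd : ∀ k,
      (η₁ ≤ (f (x k) - f (x k + s k)) / (mdl k 0 - mdl k (s k)) →
        x (k + 1) = x k + s k ∧ Δ k ≤ Δ (k + 1) ∧ Δ (k + 1) ≤ min (γinc * Δ k) Δmax) ∧
      ((f (x k) - f (x k + s k)) / (mdl k 0 - mdl k (s k)) < η₁ →
        x (k + 1) = x k ∧ Δ (k + 1) = γdec * Δ k)) :
    liminf (fun k => ‖gradient f (x k)‖) atTop = 0 := by
  have hm0 : ∀ k, mdl k 0 = f (x k) := by simp [hmdl]
  have hared : ∀ k, |(f (x k) - f (x k + s k)) - (mdl k 0 - mdl k (s k))| ≤ κf * Δ k ^ 2 := by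
    intro k
    rw [hm0, abs_sub_comm]
    convert hfl1 k (s k) (hs k) using 2
    ring
  have hG : ∀ k, ‖gradient f (x k)‖ ≤ ‖g k‖ + κg * Δ k := by
    intro k
    have := hfl2 k 0 (by simpa using (hΔpos k).le)
    simp only [add_zero, map_zero] at this
    exact (norm_le_norm_add_norm_sub' _ (g k)).trans (by gcongr)
  have hcauchy : ∀ k, 1 / 2 * ‖g k‖ * min (Δ k) (‖g k‖ / Hmax) ≤ mdl k 0 - mdl k (s k) :=
    fun k => (half_mul_min_div_le_of_norm_le (H k) (norm_nonneg _) (hHb k)).trans (hpred k)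
  refine liminf_eq_zero_of_frequently_lt (fun k => norm_nonneg _) fun ε hε =>
    TrustRegion.frequently_lt (F := fun k => f (x k)) hΔpos hη₁.1 hη₁.2 hγdec0 hγdec1 hκΔ
      hHmax hcauchy hared hG hg
      (fun k h => ⟨by rw [((hupd k).1 h).1]; ring, ((hupd k).1 h).2.1⟩)
      (fun k h => ⟨by rw [((hupd k).2 h).1], ((hupd k).2 h).2⟩)
      ⟨finf, by rintro _ ⟨k, rfl⟩; exact hbdd _⟩ hε

theorem stmt18 (n : ℕ)
    (f : EuclideanSpace ℝ (Fin n) → ℝ) (hf : ContDiff ℝ 1 f)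
    (Lg : ℝ) (hLg : 0 < Lg)
    (hlip : ∀ a c : EuclideanSpace ℝ (Fin n),
      ‖gradient f a - gradient f c‖ ≤ Lg * ‖a - c‖)
    (finf : ℝ) (hbdd : ∀ z, finf ≤ f z)
    (η₁ γdec γinc Δmax κf κg κΔ Hmax : ℝ)
    (hη₁ : η₁ ∈ Set.Ioo (0 : ℝ) 1) (hγdec0 : 0 < γdec) (hγdec1 : γdec < 1)
    (hγinc : 1 < γinc) (hΔmax : 0 < Δmax)
    (hκf : 0 < κf) (hκg : 0 < κg) (hκΔ : 0 < κΔ) (hHmax : 0 < Hmax)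
    (x : ℕ → EuclideanSpace ℝ (Fin n)) (Δ : ℕ → ℝ)
    (g : ℕ → EuclideanSpace ℝ (Fin n)) (H : ℕ → Matrix (Fin n) (Fin n) ℝ)
    (s : ℕ → EuclideanSpace ℝ (Fin n))
    (hΔpos : ∀ k, 0 < Δ k) (hΔle : ∀ k, Δ k ≤ Δmax)
    (hHsymm : ∀ k, (H k).IsSymm) (hHb : ∀ k, ‖H k‖ ≤ Hmax)
    (hs : ∀ k, ‖s k‖ ≤ Δ k)
    (mdl : ℕ → EuclideanSpace ℝ (Fin n) → ℝ)
    (hmdl : mdl = fun k v => f (x k) + ⟪g k, v⟫ +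
      (1 / 2) * ⟪v, Matrix.toEuclideanLin (H k) v⟫)
    (hfl1 : ∀ k, ∀ v : EuclideanSpace ℝ (Fin n), ‖v‖ ≤ Δ k →
      |f (x k + v) - mdl k v| ≤ κf * Δ k ^ 2)
    (hfl2 : ∀ k, ∀ v : EuclideanSpace ℝ (Fin n), ‖v‖ ≤ Δ k →
      ‖gradient f (x k + v) - (g k + Matrix.toEuclideanLin (H k) v)‖ ≤ κg * Δ k)
    (hg : ∀ k, κΔ * Δ k < ‖g k‖)
    (hpred : ∀ k, (1 / 2) * ‖g k‖ *
      (if H k = 0 then Δ k else min (Δ k) (‖g k‖ / ‖H k‖)) ≤ mdl k 0 - mdl k (s k))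
    (hupd : ∀ k,
      (η₁ ≤ (f (x k) - f (x k + s k)) / (mdl k 0 - mdl k (s k)) →
        x (k + 1) = x k + s k ∧ Δ k ≤ Δ (k + 1) ∧ Δ (k + 1) ≤ min (γinc * Δ k) Δmax) ∧
      ((f (x k) - f (x k + s k)) / (mdl k 0 - mdl k (s k)) < η₁ →
        x (k + 1) = x k ∧ Δ (k + 1) = γdec * Δ k)) :
    liminf (fun k => ‖gradient f (x k)‖) atTop = 0 :=
  stmt18_general n f finf hbdd η₁ γdec γinc Δmax κf κg κΔ Hmax hη₁ hγdec0 hγdec1 hκΔ hHmax x Δ g H s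
    hΔpos hHb hs mdl hmdl hfl1 hfl2 hg hpred hupd
end
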